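/- If y ∈ ℕ satisfies y ≥ 2 and a₁ − d ≥ C(y,2) + 1 (where C(y,2) is the binomial coefficient y choose 2), then ω_{a₁−1} ≥ ω_y + ω₁; in particular ⌊ω_{a₁−1}/a₁⌋ ≥ ⌊ω_y/a₁⌋ + ⌊ω₁/a₁⌋ and F > ω_y. -/

import Mathlib

/-!
Write `n = a₁` and `Ap = Ap(S)`. Splitting off one generator shows that a nonzero element of `Ap`
is either a generator other than `n` or a sum of two nonzero elements of `Ap`. If
`ω_{n-1} < ω_y + ω_1`, both summands of such a sum lie among `ω_1, …, ω_{y-1}`, so `Ap` is covered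
by `0`, the `d - 1` generators other than `n` and the `C(y, 2)` sums of unordered pairs from
`ω_1, …, ω_{y-1}`; hence `n ≤ d + C(y, 2)`. The other two claims follow from `ω_{n-1} ≤ F + n`
and `n < ω_1`.
-/

open Set

theorem StrictMonoOn.apply_zero_eq_zero {ω : ℕ → ℕ} {n : ℕ} (hω : StrictMonoOn ω (Iio n))
    (h0 : 0 ∈ ω '' Iio n) : ω 0 = 0 := by
  obtain ⟨k, hk, hωk⟩ := h0
  rcases Nat.eq_zero_or_pos k with rfl | hk0
  · exact hωk
  · exact absurd (hωk ▸ hω (mem_Iio.2 (hk0.trans hk)) hk hk0) (Nat.not_lt_zero _)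

theorem StrictMonoOn.lt_of_add_lt {ω : ℕ → ℕ} {n p q y : ℕ} (hω : StrictMonoOn ω (Iio n))
    (hp : p < n) (hq : q < n) (hq1 : 1 ≤ q) (h : ω p + ω q < ω y + ω 1) : p < y := by
  by_contra! hyp
  have := hω.monotoneOn (mem_Iio.2 (by omega)) hp hyp
  have := hω.monotoneOn (mem_Iio.2 (by omega)) hq hq1
  omega

def AddSubmonoid.apery {M : Type*} [AddMonoid M] (S : AddSubmonoid M) (n : M) : Set M :=
  {w ∈ S | ¬ ∃ s ∈ S, s + n = w}

namespace AddSubmonoid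

variable {M ι : Type*}

theorem eq_zero_or_exists_add_of_mem_closure_range [AddMonoid M] {f : ι → M} {x : M}
    (hx : x ∈ closure (range f)) : x = 0 ∨ ∃ i, ∃ y ∈ closure (range f), f i + y = x := by
  induction hx using closure_induction with
  | mem _ hx =>
    obtain ⟨i, rfl⟩ := hx
    exact .inr ⟨i, 0, zero_mem _, add_zero _⟩
  | zero => exact .inl rfl
  | add x y _ hy hx hy' =>
    rcases hx with rfl | ⟨i, z, hz, rfl⟩
    · simpa only [zero_add] using hy'
    · exact .inr ⟨i, z + y, add_mem hz hy, (add_assoc _ _ _).symm⟩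

section Apery

variable [AddCommMonoid M] {S : AddSubmonoid M} {n u v : M}

theorem self_notMem_apery : n ∉ S.apery n := fun h => h.2 ⟨0, S.zero_mem, zero_add n⟩

theorem mem_apery_of_add_left (hu : u ∈ S) (hv : v ∈ S) (h : u + v ∈ S.apery n) :
    u ∈ S.apery n :=
  ⟨hu, fun ⟨s, hs, hsu⟩ => h.2 ⟨s + v, add_mem hs hv, by rw [← hsu, add_right_comm]⟩⟩

theorem mem_apery_of_add_right (hu : u ∈ S) (hv : v ∈ S) (h : u + v ∈ S.apery n) :
    v ∈ S.apery n :=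
  mem_apery_of_add_left hv hu (add_comm u v ▸ h)

end Apery

theorem zero_mem_apery {S : AddSubmonoid ℕ} {n : ℕ} (hn : 0 < n) : 0 ∈ S.apery n :=
  ⟨S.zero_mem, fun ⟨s, _, hs⟩ => by omega⟩

theorem le_add_of_mem_apery {S : AddSubmonoid ℕ} {n w F : ℕ} (hF : ∀ m, F < m → m ∈ S)
    (hw : w ∈ S.apery n) : w ≤ F + n := by
  by_contra! h
  exact hw.2 ⟨w - n, hF _ (by omega), by omega⟩

theorem closure_range_eq_setOf_sum [Fintype ι] (a : ι → ℕ) :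
    (closure (range a) : Set ℕ) = {m | ∃ c : ι → ℕ, m = ∑ i, c i * a i} := by
  ext m
  simp only [SetLike.mem_coe, mem_closure_range_iff_of_fintype, smul_eq_mul, mem_ofPred_eq]

variable {a : ι → ℕ} {i₀ : ι} {w : ℕ}

theorem lt_of_mem_apery (ha : ∀ i, a i₀ ≤ a i) (hw : w ∈ (closure (range a)).apery (a i₀))
    (hw0 : w ≠ 0) : a i₀ < w := by
  obtain rfl | ⟨i, v, -, rfl⟩ := eq_zero_or_exists_add_of_mem_closure_range hw.1
  · exact absurd rfl hw0
  · exact lt_of_le_of_ne (le_add_right (ha i)) fun h => self_notMem_apery (h ▸ hw)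

theorem mem_apery_closure_range_cases (ha : ∀ i, 0 < a i)
    (hw : w ∈ (closure (range a)).apery (a i₀)) :
    w = 0 ∨ (∃ i ≠ i₀, a i = w) ∨
      ∃ u ∈ (closure (range a)).apery (a i₀), ∃ v ∈ (closure (range a)).apery (a i₀),
        u ≠ 0 ∧ v ≠ 0 ∧ u + v = w := by
  obtain rfl | ⟨i, v, hv, rfl⟩ := eq_zero_or_exists_add_of_mem_closure_range hw.1
  · exact .inl rfl
  have hi : a i ∈ closure (range a) := subset_closure (mem_range_self i)
  rcases eq_or_ne v 0 with rfl | hv0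
  · refine .inr (.inl ⟨i, ?_, add_zero _⟩)
    rintro rfl
    exact self_notMem_apery (by simpa only [add_zero] using hw)
  · exact .inr (.inr ⟨a i, mem_apery_of_add_left hi hv hw, v, mem_apery_of_add_right hi hv hw,
      (ha i).ne', hv0, rfl⟩)

theorem le_card_add_choose_of_lt_add [Fintype ι] [DecidableEq ι] (ha : ∀ i, 0 < a i)
    {ω : ℕ → ℕ} (hω : StrictMonoOn ω (Iio (a i₀)))
    (hω_range : ω '' Iio (a i₀) = (closure (range a)).apery (a i₀)) {y : ℕ}
    (h : ω (a i₀ - 1) < ω y + ω 1) : a i₀ ≤ Fintype.card ι + y.choose 2 := by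
  set n := a i₀
  have hω0 : ω 0 = 0 := hω.apply_zero_eq_zero (by rw [hω_range]; exact zero_mem_apery (ha i₀))
  have hindex : ∀ {u}, u ∈ (closure (range a)).apery n → u ≠ 0 →
      ∃ p, 1 ≤ p ∧ p < n ∧ ω p = u := by
    intro u hu hu0
    obtain ⟨p, hp, rfl⟩ := hω_range ▸ hu
    exact ⟨p, Nat.one_le_iff_ne_zero.2 (by rintro rfl; exact hu0 hω0), hp, rfl⟩
  set sum2 : Sym2 ℕ → ℕ := Sym2.lift ⟨fun p q => ω p + ω q, fun _ _ => add_comm _ _⟩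
  have hsub : (Finset.range n).image ω ⊆
      insert 0 ((Finset.univ.erase i₀).image a) ∪ (Finset.Ico 1 y).sym2.image sum2 := by
    intro w hw
    obtain ⟨k, hk, rfl⟩ := Finset.mem_image.1 hw
    rw [Finset.mem_range] at hk
    have hwk : ω k ≤ ω (n - 1) :=
      hω.monotoneOn (mem_Iio.2 hk) (mem_Iio.2 (by omega)) (by omega)
    simp only [Finset.mem_union, Finset.mem_insert, Finset.mem_image, Finset.mem_erase,
      Finset.mem_univ, and_true]
    rcases mem_apery_closure_range_cases ha (hω_range ▸ mem_image_of_mem ω (mem_Iio.2 hk)) with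
      h0 | ⟨i, hi, hik⟩ | ⟨u, hu, v, hv, hu0, hv0, huv⟩
    · exact .inl (.inl h0)
    · exact .inl (.inr ⟨i, hi, hik⟩)
    · obtain ⟨p, hp1, hp, rfl⟩ := hindex hu hu0
      obtain ⟨q, hq1, hq, rfl⟩ := hindex hv hv0
      refine .inr ⟨s(p, q), Finset.mk_mem_sym2_iff.2 ⟨?_, ?_⟩, huv⟩ <;> rw [Finset.mem_Ico]
      · exact ⟨hp1, hω.lt_of_add_lt hp hq hq1 (by omega)⟩
      · exact ⟨hq1, hω.lt_of_add_lt hq hp hp1 (by omega)⟩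
  have hcard : ((Finset.range n).image ω).card = n := by
    rw [Finset.card_image_of_injOn (hω.injOn.mono (by simp)), Finset.card_range]
  calc n = ((Finset.range n).image ω).card := hcard.symm
    _ ≤ (insert 0 ((Finset.univ.erase i₀).image a)).card +
          ((Finset.Ico 1 y).sym2.image sum2).card :=
      (Finset.card_le_card hsub).trans (Finset.card_union_le _ _)
    _ ≤ ((Finset.univ.erase i₀).card + 1) + (Finset.Ico 1 y).sym2.card :=
      add_le_add ((Finset.card_insert_le _ _).trans (by gcongr; exact Finset.card_image_le))
        Finset.card_image_le
    _ = Fintype.card ι + y.choose 2 := by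
      rw [Finset.card_erase_of_mem (Finset.mem_univ _), Finset.card_univ, Finset.card_sym2,
        Nat.card_Ico, Nat.sub_add_cancel (Fintype.card_pos_iff.2 ⟨i₀⟩)]
      rcases Nat.eq_zero_or_pos y with rfl | hy
      · rfl
      · rw [Nat.sub_add_cancel hy]

end AddSubmonoid

open AddSubmonoid

theorem stmt7
    (d : ℕ) (hd : 2 ≤ d)
    (a : Fin d → ℕ)
    (ha_pos : ∀ i, 0 < a i)
    (ha_mono : StrictMono a)
    (a1 : ℕ) (ha1 : a1 = a ⟨0, by omega⟩)
    (S : Set ℕ)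
    (hS : S = {m : ℕ | ∃ c : Fin d → ℕ, m = ∑ i, c i * a i})
    (F : ℕ) (hFmax : ∀ m : ℕ, F < m → m ∈ S)
    (ω : ℕ → ℕ)
    (hω_mono : ∀ i j : ℕ, i < j → j < a1 → ω i < ω j)
    (hω_range : ω '' Set.Iio a1 = {w ∈ S | ¬ ∃ s ∈ S, s + a1 = w})
    (y : ℕ) (hyd : y.choose 2 + 1 ≤ a1 - d)
    :
    ω y + ω 1 ≤ ω (a1 - 1) ∧ ω y / a1 + ω 1 / a1 ≤ ω (a1 - 1) / a1 ∧ ω y < F := by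
  subst ha1
  rw [← closure_range_eq_setOf_sum] at hS
  subst hS
  set i₀ : Fin d := ⟨0, by omega⟩
  change ω '' Iio (a i₀) = (AddSubmonoid.closure (range a)).apery (a i₀) at hω_range
  have hω : StrictMonoOn ω (Iio (a i₀)) := fun i _ j hj hij => hω_mono i j hij hj
  have hmem : ∀ k < a i₀, ω k ∈ (AddSubmonoid.closure (range a)).apery (a i₀) :=
    fun k hk => hω_range ▸ mem_image_of_mem ω hk
  have key : ω y + ω 1 ≤ ω (a i₀ - 1) := by
    by_contra! h
    have := le_card_add_choose_of_lt_add ha_pos hω hω_range h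
    rw [Fintype.card_fin] at this
    omega
  have hmax := le_add_of_mem_apery hFmax (hmem (a i₀ - 1) (by omega))
  have hω0 := hω.apply_zero_eq_zero (by rw [hω_range]; exact zero_mem_apery (ha_pos i₀))
  have hω1 := lt_of_mem_apery (fun i => ha_mono.monotone (Nat.zero_le i.val)) (hmem 1 (by omega))
    (hω0 ▸ (hω_mono 0 1 one_pos (by omega)).ne')
  exact ⟨key, Nat.div_add_div_le_add_div.trans (Nat.div_le_div_right key), by omega⟩
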